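/- For every colored tree Γ, the weights {w_d : d ∈ E(Γ)} generate the full lattice M = Hom(ℤ^g, ℤ) as an abelian group; in particular the subgroup of M generated by the weights has rank g, the number of uncolored vertices of Γ (this expresses that the affine toric variety X(Γ) has dimension g). -/

import Mathlib

noncomputable section
open Classical

/-- A rose tree whose leaves ("colored vertices") carry labels of type `α` and whose
internal vertices ("uncolored vertices") are unlabelled. -/
inductive CTree (α : Type) : Type
  | leaf (a : α) : CTree α
  | node (ts : List (CTree α)) : CTree α

namespace CTree

variable {α : Type}

/-- The subtree of `t` at a position `p` (a list of child indices), if it exists. -/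
def sub : CTree α → List ℕ → Option (CTree α)
  | t, [] => some t
  | leaf _, _ :: _ => none
  | node ts, i :: p =>
      match ts[i]? with
      | some c => sub c p
      | none => none

/-- All lists of natural numbers of length at most `k` with entries `< m`. -/
def allLists (m : ℕ) : ℕ → List (List ℕ)
  | 0 => [[]]
  | k + 1 => [] :: (List.range m).flatMap (fun i => (allLists m k).map (i :: ·))

/-- The finite set of positions of vertices of `t`. -/
def vertS (t : CTree α) : Finset (List ℕ) :=
  (allLists (sizeOf t) (sizeOf t)).toFinset.filter (fun p => (t.sub p).isSome)

/-- The finite set of positions of uncolored (internal) vertices of `t`. -/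
def uncS (t : CTree α) : Finset (List ℕ) :=
  (allLists (sizeOf t) (sizeOf t)).toFinset.filter (fun p => ∃ ts, t.sub p = some (node ts))

/-- The finite set of positions of colored vertices (leaves) of `t`. -/
def colS (t : CTree α) : Finset (List ℕ) :=
  (allLists (sizeOf t) (sizeOf t)).toFinset.filter (fun p => ∃ a, t.sub p = some (leaf a))

/-- Edges of `t` are identified with the positions of non-root vertices (an edge joins
the vertex at `p ≠ []` to its parent at `p.dropLast`). -/
def edgeS (t : CTree α) : Finset (List ℕ) := (vertS t).erase []

/-- `t` is a colored tree: every internal vertex has at least one child (so the leaves,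
i.e. the childless vertices, are exactly the colored vertices) and the root is
uncolored. -/
def IsColoredTree (t : CTree α) : Prop :=
  (∀ p, t.sub p ≠ some (node ([] : List (CTree α)))) ∧ ∃ ts, t = node ts

/-- The weight `w_d ∈ M` of an edge `d`: the sum of the dual basis vectors `e_u^*`
over uncolored vertices `u` that are descendants of the upper endpoint of `d` but not
descendants of the lower endpoint of `d`. -/
def wt (t : CTree α) (d : List ℕ) : List ℕ → ℤ := fun u =>
  if u ∈ uncS t ∧ d.dropLast <+: u ∧ ¬ d <+: u then 1 else 0

/-- `s_v ∈ M` : the sum of `e_u^*` over the uncolored descendants `u` of `v`;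
`s(Γ) = sv t []`. -/
def sv (t : CTree α) (v : List ℕ) : List ℕ → ℤ := fun u =>
  if u ∈ uncS t ∧ v <+: u then 1 else 0

/-- The pairing between `M = Hom(ℤ^g, ℤ)` and `ℤ^g` (both realized as integer-valued
functions on the uncolored vertices of `t`). -/
def pairZ (t : CTree α) (μ x : List ℕ → ℤ) : ℤ := ∑ p ∈ uncS t, μ p * x p

/-- The pairing between `M` and `ℝ^g`. -/
def pairR (t : CTree α) (μ : List ℕ → ℤ) (x : List ℕ → ℝ) : ℝ :=
  ∑ p ∈ uncS t, (μ p : ℝ) * x p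

/-- The multiset of edges of the (downward) path from the vertex `v` to the vertex `c`;
each edge occurs with multiplicity one. -/
def pathEdges (t : CTree α) (v c : List ℕ) : Multiset (List ℕ) :=
  ((edgeS t).filter (fun d => v <+: d ∧ d ≠ v ∧ d <+: c)).val

/-- The relation `A ∼ B` on multisets of edges: `A` and `B` consist exactly of the edges
of two non-self-crossing paths from a common vertex to two colored vertices. -/
def Sim (t : CTree α) (A B : Multiset (List ℕ)) : Prop :=
  ∃ v ∈ vertS t, ∃ c₁ ∈ colS t, ∃ c₂ ∈ colS t, v <+: c₁ ∧ v <+: c₂ ∧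
    A = pathEdges t v c₁ ∧ B = pathEdges t v c₂

/-- `Y` is a minimally complete subset of the set of edges of `t`: every
(non-self-crossing) path from the root to a colored vertex contains exactly one edge
of `Y`. -/
def MinComplete (t : CTree α) (Y : Finset (List ℕ)) : Prop :=
  Y ⊆ edgeS t ∧ ∀ c ∈ colS t, ∃! d, d ∈ Y ∧ d <+: c

/-- The finite set of minimally complete subsets of the edge set of `t`. -/
def MCfin (t : CTree α) : Finset (Finset (List ℕ)) :=
  (edgeS t).powerset.filter (fun Y => MinComplete t Y)

/-- The dual cone `C(Γ) = {x ∈ ℝ^g | ⟨w_d, x⟩ ≥ 0 for all edges d}`. -/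
def dualCone (t : CTree α) : Set (List ℕ → ℝ) :=
  {x | (∀ p, p ∉ uncS t → x p = 0) ∧ ∀ d ∈ edgeS t, 0 ≤ pairR t (wt t d) x}

/-- The ray spanned by a vector `v`. -/
def ray (v : List ℕ → ℝ) : Set (List ℕ → ℝ) := {x | ∃ c : ℝ, 0 ≤ c ∧ x = c • v}

/-- `F` is a one-dimensional face (extreme ray) of the convex cone `C`. -/
def IsOneDimFace (C F : Set (List ℕ → ℝ)) : Prop :=
  F ⊆ C ∧ (∃ v, v ≠ 0 ∧ F = ray v) ∧
    ∀ x ∈ C, ∀ y ∈ C, x + y ∈ F → x ∈ F ∧ y ∈ F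

/-- The convex cone generated by a set `G ⊆ ℤ^g` inside `ℝ^g`: all finite nonnegative
real combinations of elements of `G`. -/
def coneHull (G : Set (List ℕ → ℤ)) : Set (List ℕ → ℝ) :=
  {x | ∃ (F : Finset (List ℕ → ℤ)) (c : (List ℕ → ℤ) → ℝ),
    ↑F ⊆ G ∧ (∀ v ∈ F, 0 ≤ c v) ∧
    x = ∑ v ∈ F, c v • (fun p => ((v p : ℤ) : ℝ))}

/-- `e_{v_0} ∈ ℤ^g`: the basis vector of the root vertex. -/
def e0 : List ℕ → ℤ := fun p => if p = [] then 1 else 0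

/-- The inclusion `ℤ^{g_i} → ℤ^g` corresponding to the `i`-th principal subtree. -/
def shift (i : ℕ) (f : List ℕ → ℤ) : List ℕ → ℤ := fun p =>
  match p with
  | [] => 0
  | j :: q => if j = i then f q else 0

def isNodeB : CTree α → Bool
  | leaf _ => false
  | node _ => true

/-- The recursively defined set `G(Γ) ⊆ ℤ^g`: `G(Γ)` consists of all vectors
`e_{v₀} + ∑_{i ∈ J} (w_i - e_{v₀})` where `J` ranges over subsets of the set of indices
of non-trivial principal subtrees and `w_i ∈ G(Γ_i)` (in particular if `g = 1` this is
just `{e_{v₀}}`). -/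
def Gset : CTree α → Set (List ℕ → ℤ)
  | leaf _ => ∅
  | node ts =>
      {v | ∃ (J : Finset (Fin ts.length)) (w : Fin ts.length → (List ℕ → ℤ)),
        (∀ i ∈ J, (ts.get i).isNodeB = true ∧ w i ∈ Gset (ts.get i)) ∧
        v = e0 + ∑ i ∈ J, (shift i.1 (w i) - e0)}
  termination_by t => sizeOf t
  decreasing_by
    have h1 : ts.get i ∈ ts := List.get_mem ts i
    have h2 := List.sizeOf_lt_of_mem h1
    simp only [CTree.node.sizeOf_spec]
    omega

/-- Transport of a set of edges of `Γ` to the `i`-th principal subtree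
(`Y ∩ E(Γ_i)`, rewritten in the coordinates of `Γ_i`). -/
def sect (i : ℕ) (Y : Finset (List ℕ)) : Finset (List ℕ) :=
  (Y.filter (fun p => p.head? = some i)).image List.tail

/-- The recursively defined vector `v_Y ∈ ℤ^g` attached to a (minimally complete) set
of edges `Y`: `v_Y = e_{v₀} + ∑_{i ∈ I} (v_{Y_i} - e_{v₀})` where
`I = {i | d_i ∉ Y}` and `Y_i = Y ∩ E(Γ_i)` (if `g = 1` this is just `e_{v₀}`). -/
def vY : CTree α → Finset (List ℕ) → (List ℕ → ℤ)
  | leaf _, _ => 0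
  | node ts, Y =>
      e0 + ∑ i ∈ Finset.univ.filter (fun i : Fin ts.length => [i.1] ∉ Y),
        (shift i.1 (vY (ts.get i) (sect i.1 Y)) - e0)
  termination_by t => sizeOf t
  decreasing_by
    have h1 : ts.get i ∈ ts := List.get_mem ts i
    have h2 := List.sizeOf_lt_of_mem h1
    simp only [CTree.node.sizeOf_spec]
    omega

/-- The set of balanced labellings `X(Γ) ⊆ ℂ^{E(Γ)}`. -/
def Xbal (t : CTree α) : Set (List ℕ → ℂ) :=
  {x | ∀ v ∈ uncS t, ∀ c ∈ colS t, ∀ c' ∈ colS t, v <+: c → v <+: c' →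
    ((pathEdges t v c).map x).prod = ((pathEdges t v c').map x).prod}

/-- `Y ⊆ E(Γ)` is complete: for every finite multiset `A` of edges, the monomial
`∏_{d ∈ A} x_d` vanishes identically on `{x ∈ X(Γ) | x_y = 0 ∀ y ∈ Y}` if and only if
`A` contains at least one edge belonging to `Y`. -/
def CompleteSet (t : CTree α) (Y : Finset (List ℕ)) : Prop :=
  ∀ A : Multiset (List ℕ), (∀ d ∈ A, d ∈ edgeS t) →
    ((∀ x ∈ Xbal t, (∀ y ∈ Y, x y = 0) → (A.map x).prod = 0) ↔ ∃ d ∈ A, d ∈ Y)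

/-- A partition of a type `I`: a finite collection of nonempty pairwise disjoint
subsets covering `I`. -/
def IsPart {I : Type} (P : Finset (Finset I)) : Prop :=
  (∀ S ∈ P, S ≠ ∅) ∧ ∀ a : I, ∃! S, S ∈ P ∧ a ∈ S

/-- The tree with a single uncolored vertex whose children are the colored vertices
labelled by the elements of `S`. -/
def blockTree {I : Type} (S : Finset I) : CTree I := node (S.toList.map leaf)

/-- The colored tree `Γ_P` of a partition `P`: the root has one child for each block
`S ∈ P`, an uncolored vertex whose children are colored vertices labelled by the
elements of `S`. -/
def gammaP {I : Type} (P : Finset (Finset I)) : CTree I := node (P.toList.map blockTree)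

/-- A tree homomorphism `t → t'`, described by a map `f` on vertex positions: it sends
root to root, vertices to vertices, the two endpoints of any edge to the two endpoints
of an edge, and restricts to a label-preserving bijection between the colored
vertices. -/
def TreeHom {I : Type} (t t' : CTree I) (f : List ℕ → List ℕ) : Prop :=
  f [] = [] ∧
  (∀ p ∈ vertS t, f p ∈ vertS t') ∧
  (∀ p ∈ vertS t, p ≠ [] →
    (f p ≠ [] ∧ (f p).dropLast = f p.dropLast) ∨
    (f p.dropLast ≠ [] ∧ (f p.dropLast).dropLast = f p)) ∧
  (∀ p a, t.sub p = some (leaf a) → t'.sub (f p) = some (leaf a)) ∧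
  Set.BijOn f {p | ∃ a, t.sub p = some (leaf a)} {q | ∃ a, t'.sub q = some (leaf a)}

/-- A partition `P` of the label set is compatible with the colored tree `t` if there
exists a tree homomorphism `t → Γ_P`. -/
def Compatible {I : Type} (t : CTree I) (P : Finset (Finset I)) : Prop :=
  ∃ f, TreeHom t (gammaP P) f

/-- `C_y ⊆ I` : the labels of the colored vertices whose path from the root contains
the edge `y`. -/
def Cy {I : Type} [Fintype I] [DecidableEq I] (t : CTree I) (y : List ℕ) : Finset I :=
  Finset.univ.filter (fun a => ∃ p, t.sub p = some (leaf a) ∧ y <+: p)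

end CTree

/-! Write `s_v` (`sv`) for the sum of `e_u^*` over the uncolored descendants `u` of `v`.
Then `w_d = s_{parent} - s_{child}`, and `s_c = 0` at a colored vertex `c`. Following the
first child from any vertex down to a colored vertex, `s_v` telescopes into a sum of
weights, and finally `e_u^* = s_u - ∑_{c child of u} s_c`. -/

theorem List.length_lt_sizeOf {β : Type*} [SizeOf β] : ∀ l : List β, l.length < sizeOf l
  | [] => by simp
  | a :: l => by
    have := List.length_lt_sizeOf l
    simp only [List.cons.sizeOf_spec, List.length_cons]
    omega

namespace CTree

variable {α : Type}

theorem sub_append : ∀ (t : CTree α) (p q : List ℕ),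
    t.sub (p ++ q) = (t.sub p).bind (fun s => s.sub q)
  | t, [], q => by simp [sub]
  | leaf a, i :: p, q => by simp [sub]
  | node ts, i :: p, q => by
    simp only [List.cons_append, sub]
    cases ts[i]? with
    | none => simp
    | some c => simp [sub_append c p q]

theorem sub_append_singleton {t : CTree α} {u : List ℕ} {ts : List (CTree α)}
    (h : t.sub u = some (node ts)) {i : ℕ} (hi : i < ts.length) :
    t.sub (u ++ [i]) = some ts[i] := by
  simp [sub_append, h, sub, List.getElem?_eq_getElem hi]

theorem lt_length_of_sub_append_cons {t : CTree α} {u : List ℕ} {ts : List (CTree α)}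
    (h : t.sub u = some (node ts)) {j : ℕ} {r : List ℕ} {s : CTree α}
    (hs : t.sub (u ++ j :: r) = some s) : j < ts.length := by
  by_contra hj
  simp [sub_append, h, sub, List.getElem?_eq_none (not_lt.mp hj)] at hs

theorem mem_allLists : ∀ (k m : ℕ) (p : List ℕ),
    p ∈ allLists m k ↔ p.length ≤ k ∧ ∀ i ∈ p, i < m
  | 0, m, p => by
    simp only [allLists, List.mem_singleton, nonpos_iff_eq_zero, List.length_eq_zero_iff]
    constructor
    · rintro rfl; simp
    · exact And.left
  | k + 1, m, [] => by simp [allLists]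
  | k + 1, m, i :: q => by
    simp [allLists, mem_allLists k m q, and_left_comm]

theorem mem_allLists_sizeOf_of_sub_eq_some :
    ∀ {t : CTree α} {p : List ℕ} {s : CTree α}, t.sub p = some s →
      p ∈ allLists (sizeOf t) (sizeOf t)
  | t, [], _, _ => by simp [mem_allLists]
  | leaf a, i :: p, _, h => by simp [sub] at h
  | node ts, i :: p, s, h => by
    simp only [sub] at h
    cases hc : ts[i]? with
    | none => simp [hc] at h
    | some c =>
      rw [hc] at h
      obtain ⟨hlen, hlt⟩ := (mem_allLists _ _ _).mp (mem_allLists_sizeOf_of_sub_eq_some h)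
      have hc_lt : sizeOf c < sizeOf ts := List.sizeOf_lt_of_mem (List.mem_of_getElem? hc)
      have hi : i < ts.length := (List.getElem?_eq_some_iff.mp hc).1
      have := List.length_lt_sizeOf ts
      rw [mem_allLists]
      simp only [List.length_cons, List.mem_cons, forall_eq_or_imp, node.sizeOf_spec]
      exact ⟨by omega, by omega, fun j hj => by have := hlt j hj; omega⟩

theorem mem_uncS {t : CTree α} {p : List ℕ} :
    p ∈ uncS t ↔ ∃ ts, t.sub p = some (node ts) := by
  rw [uncS, Finset.mem_filter, List.mem_toFinset]
  exact ⟨And.right, fun ⟨ts, h⟩ => ⟨mem_allLists_sizeOf_of_sub_eq_some h, ts, h⟩⟩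

theorem mem_edgeS_of_sub_eq_some {t : CTree α} {d : List ℕ} {s : CTree α} (hd : d ≠ [])
    (h : t.sub d = some s) : d ∈ edgeS t := by
  simp [edgeS, vertS, hd, h, mem_allLists_sizeOf_of_sub_eq_some h]

theorem wt_eq_sv_sub_sv (t : CTree α) (d : List ℕ) : wt t d = sv t d.dropLast - sv t d := by
  funext u
  have := (List.dropLast_prefix d).trans (l₃ := u)
  by_cases hu : u ∈ uncS t <;> by_cases hd : d <+: u <;> simp_all [wt, sv]

theorem wt_apply_eq_zero_of_notMem {t : CTree α} {p : List ℕ} (hp : p ∉ uncS t)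
    (d : List ℕ) :
    wt t d p = 0 := by
  simp [wt, hp]

theorem sv_eq_zero_of_sub_eq_leaf {t : CTree α} {v : List ℕ} {a : α}
    (h : t.sub v = some (leaf a)) : sv t v = 0 := by
  funext u
  simp only [sv, Pi.zero_apply, ite_eq_right_iff]
  rintro ⟨hu, l, rfl⟩
  obtain ⟨ts, hts⟩ := mem_uncS.mp hu
  cases l <;> simp [sub_append, h, sub] at hts

theorem pi_single_eq_sv_sub_sum_sv {t : CTree α} {u : List ℕ} {ts : List (CTree α)}
    (h : t.sub u = some (node ts)) :
    Pi.single u 1 = sv t u - ∑ i ∈ Finset.range ts.length, sv t (u ++ [i]) := by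
  funext w
  simp only [Pi.sub_apply, Finset.sum_apply, sv]
  by_cases hw : w ∈ uncS t
  · by_cases huw : u <+: w
    · obtain ⟨l, rfl⟩ := huw
      cases l with
      | nil =>
        have hchild (i : ℕ) : ¬ u ++ [i] <+: u := fun hi => by simpa using hi.length_le
        simp_all
      | cons j r =>
        obtain ⟨ts', hts'⟩ := mem_uncS.mp hw
        have hj := lt_length_of_sub_append_cons h hts'
        simp [hw, List.prefix_append_right_inj, hj]
    · have hchild (i : ℕ) : ¬ u ++ [i] <+: w := fun hi =>
        huw ((List.prefix_append u [i]).trans hi)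
      simp [hw, huw, hchild, show w ≠ u by rintro rfl; exact huw (List.prefix_refl w)]
  · have hwu : w ≠ u := by rintro rfl; exact hw (mem_uncS.mpr ⟨ts, h⟩)
    simp [hw, hwu]

def weightSubgroup (t : CTree α) : AddSubgroup (List ℕ → ℤ) :=
  AddSubgroup.closure {f | ∃ d ∈ edgeS t, f = wt t d}

theorem wt_mem_weightSubgroup {t : CTree α} {d : List ℕ} (hd : d ∈ edgeS t) :
    wt t d ∈ weightSubgroup t :=
  AddSubgroup.subset_closure ⟨d, hd, rfl⟩

theorem sv_mem_weightSubgroup {t : CTree α} (hne : ∀ p, t.sub p ≠ some (node [])) :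
    ∀ (s : CTree α) {v : List ℕ}, t.sub v = some s → sv t v ∈ weightSubgroup t
  | leaf a, v, h => by
    rw [sv_eq_zero_of_sub_eq_leaf h]
    exact zero_mem _
  | node ts, v, h => by
    have h0 : 0 < ts.length := List.length_pos_iff.mpr (by rintro rfl; exact hne v h)
    have hchild := sub_append_singleton h h0
    have hsplit : sv t v = wt t (v ++ [0]) + sv t (v ++ [0]) := by
      rw [wt_eq_sv_sub_sv, List.dropLast_concat, sub_add_cancel]
    rw [hsplit]
    exact add_mem (wt_mem_weightSubgroup (mem_edgeS_of_sub_eq_some (by simp) hchild))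
      (sv_mem_weightSubgroup hne ts[0] hchild)
termination_by s => sizeOf s
decreasing_by
  have := List.sizeOf_lt_of_mem (List.getElem_mem h0)
  simp only [node.sizeOf_spec]
  omega

theorem pi_single_mem_weightSubgroup {t : CTree α} (hne : ∀ p, t.sub p ≠ some (node []))
    {u : List ℕ} (hu : u ∈ uncS t) : Pi.single u 1 ∈ weightSubgroup t := by
  obtain ⟨ts, h⟩ := mem_uncS.mp hu
  rw [pi_single_eq_sv_sub_sum_sv h]
  refine sub_mem (sv_mem_weightSubgroup hne _ h) (sum_mem fun i hi => ?_)
  exact sv_mem_weightSubgroup hne _ (sub_append_singleton h (Finset.mem_range.mp hi))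

end CTree

theorem AddSubgroup.closure_eq_setOf_supported {ι : Type*} [DecidableEq ι] (s : Finset ι)
    (G : Set (ι → ℤ)) (hG : ∀ g ∈ G, ∀ p ∉ s, g p = 0)
    (hsingle : ∀ u ∈ s, Pi.single u 1 ∈ AddSubgroup.closure G) :
    (AddSubgroup.closure G : Set (ι → ℤ)) = {μ | ∀ p ∉ s, μ p = 0} := by
  apply Set.Subset.antisymm
  · have hle : AddSubgroup.closure G ≤ AddSubgroup.pi {p | p ∉ s} fun _ => ⊥ :=
      (AddSubgroup.closure_le _).mpr fun g hg => by
        simpa [AddSubgroup.mem_pi] using hG g hg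
    intro μ hμ
    simpa [AddSubgroup.mem_pi] using hle hμ
  · intro μ hμ
    have hsum : μ = ∑ u ∈ s, μ u • Pi.single u 1 := by
      funext p
      by_cases hp : p ∈ s <;> simp [Finset.sum_apply, Pi.single_apply, hp, hμ p]
    rw [SetLike.mem_coe, hsum]
    exact sum_mem fun u hu => zsmul_mem (hsingle u hu) (μ u)

/-- The weights `{w_d : d ∈ E(Γ)}` generate the full lattice
`M = Hom(ℤ^g, ℤ)` (realized as the integer-valued functions supported on the uncolored
vertices) as an abelian group. -/
theorem weights_generate_lattice {α : Type} (t : CTree α) (ht : t.IsColoredTree) :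
    (AddSubgroup.closure {f : List ℕ → ℤ | ∃ d ∈ CTree.edgeS t, f = CTree.wt t d} :
        Set (List ℕ → ℤ)) =
      {μ : List ℕ → ℤ | ∀ p, p ∉ CTree.uncS t → μ p = 0} := by
  refine AddSubgroup.closure_eq_setOf_supported _ _ ?_ ?_
  · rintro _ ⟨d, -, rfl⟩ p hp
    exact CTree.wt_apply_eq_zero_of_notMem hp d
  · exact fun u hu => CTree.pi_single_mem_weightSubgroup ht.1 hu
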